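/- arXiv:2508.08614 — 2 statements merged into one kernel-verified Lean document; each statement's English description precedes it below -/
import Mathlib

section
/- Let N ≥ 3 and let p, q > 0 satisfy p + q = 2N/(N−2) with q < N/(N−2) < p. For λ ≥ 1, consider the integral I(λ) = ∫_{ℝ^N} (1 + |x|²)^{−p(N−2)/2} · λ^{q(N−2)/2} (1 + λ²|x − ζ|²)^{−q(N−2)/2} dx with |ζ| ≤ λ^{−1}. Then there exist constants 0 < c ≤ C depending only on N, p, q such that c · λ^{−q(N−2)/2} ≤ I(λ) ≤ C · λ^{−q(N−2)/2} as λ → ∞. -/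
/-!
Write `a = p(N-2)/2`, `b = q(N-2)/2`, so that `2b < N < 2a`. Away from `ζ` the rescaled bubble
satisfies `λ^b (1 + λ²|x-ζ|²)^(-b) ≤ λ^(-b) |x-ζ|^(-2b)`; this is integrable on the unit ball
around `ζ` since `2b < N`, and bounded by `λ^(-b)` outside it, where `(1 + |x|²)^(-a)` is
integrable since `2a > N`. For the lower bound, on the unit ball `|x - ζ| ≤ 2`, so the integrand
is at least `2^(-a) 5^(-b) λ^(-b)` there.
-/

open MeasureTheory Metric Set Module

lemma rpow_mul_one_add_sq_rpow_neg_le {lam t b : ℝ} (hlam : 0 < lam) (ht : 0 < t) (hb : 0 ≤ b) :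
    lam ^ b * (1 + lam ^ 2 * t ^ 2) ^ (-b) ≤ lam ^ (-b) * t ^ (-(2 * b)) := by
  have hsq : (lam ^ 2 * t ^ 2) ^ (-b) = lam ^ (-(2 * b)) * t ^ (-(2 * b)) := by
    rw [← mul_pow, ← Real.rpow_natCast_mul (by positivity), Real.mul_rpow hlam.le ht.le]
    norm_num
  calc lam ^ b * (1 + lam ^ 2 * t ^ 2) ^ (-b)
      ≤ lam ^ b * (lam ^ 2 * t ^ 2) ^ (-b) := by
        refine mul_le_mul_of_nonneg_left ?_ (by positivity)
        exact Real.rpow_le_rpow_of_nonpos (by positivity) (by linarith) (by linarith)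
    _ = lam ^ (-b) * t ^ (-(2 * b)) := by
        rw [hsq, ← mul_assoc, ← Real.rpow_add hlam]
        ring_nf

lemma rpow_mul_rpow_neg_le_rpow_mul_one_add_sq {lam t R b : ℝ} (hlam : 1 ≤ lam) (ht : 0 ≤ t)
    (htR : t ≤ R) (hb : 0 ≤ b) :
    (1 + R ^ 2) ^ (-b) * lam ^ (-b) ≤ lam ^ b * (1 + lam ^ 2 * t ^ 2) ^ (-b) := by
  have hlam0 : 0 < lam := by linarith
  have hbase : 1 + lam ^ 2 * t ^ 2 ≤ (1 + R ^ 2) * lam ^ 2 := by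
    nlinarith [one_le_pow₀ (n := 2) hlam, mul_le_mul_of_nonneg_left (pow_le_pow_left₀ ht htR 2)
      (sq_nonneg lam)]
  calc (1 + R ^ 2) ^ (-b) * lam ^ (-b)
      = lam ^ b * ((1 + R ^ 2) * lam ^ 2) ^ (-b) := by
        rw [Real.mul_rpow (by positivity) (by positivity), ← Real.rpow_natCast_mul hlam0.le,
          mul_left_comm, ← Real.rpow_add hlam0]
        ring_nf
    _ ≤ lam ^ b * (1 + lam ^ 2 * t ^ 2) ^ (-b) := by
        refine mul_le_mul_of_nonneg_left ?_ (by positivity)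
        exact Real.rpow_le_rpow_of_nonpos (by positivity) hbase (by linarith)

variable {E : Type*} [NormedAddCommGroup E]

/-- `U_{1,0}^p U_{λ,ζ}^q` with `a = p(N-2)/2` and `b = q(N-2)/2`. -/
noncomputable def bubbleProduct (a b lam : ℝ) (ζ x : E) : ℝ :=
  (1 + ‖x‖ ^ 2) ^ (-a) * (lam ^ b * (1 + lam ^ 2 * ‖x - ζ‖ ^ 2) ^ (-b))

lemma bubbleProduct_nonneg {a b lam : ℝ} (hlam : 0 ≤ lam) (ζ x : E) :
    0 ≤ bubbleProduct a b lam ζ x := by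
  unfold bubbleProduct
  positivity

lemma bubbleProduct_le_of_ne {a b lam : ℝ} (ha : 0 ≤ a) (hb : 0 ≤ b) (hlam : 0 < lam)
    {ζ x : E} (hx : x ≠ ζ) :
    bubbleProduct a b lam ζ x ≤ lam ^ (-b) *
      ((ball (0 : E) 1).indicator (fun y ↦ ‖y‖ ^ (-(2 * b))) (x - ζ) + (1 + ‖x‖ ^ 2) ^ (-a)) := by
  set u := (1 + ‖x‖ ^ 2) ^ (-a)
  set t := ‖x - ζ‖
  have ht : 0 < t := norm_pos_iff.2 (sub_ne_zero.2 hx)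
  have hu₀ : 0 ≤ u := by positivity
  have hu₁ : u ≤ 1 :=
    Real.rpow_le_one_of_one_le_of_nonpos (by nlinarith [sq_nonneg ‖x‖]) (by linarith)
  have hind : u * t ^ (-(2 * b)) ≤
      (ball (0 : E) 1).indicator (fun y ↦ ‖y‖ ^ (-(2 * b))) (x - ζ) + u := by
    by_cases ht1 : t < 1
    · rw [indicator_of_mem (mem_ball_zero_iff.2 ht1)]
      nlinarith [Real.rpow_nonneg ht.le (-(2 * b))]
    · rw [indicator_of_notMem (mt mem_ball_zero_iff.1 ht1), zero_add]
      exact mul_le_of_le_one_right hu₀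
        (Real.rpow_le_one_of_one_le_of_nonpos (not_lt.1 ht1) (by linarith))
  calc bubbleProduct a b lam ζ x ≤ u * (lam ^ (-b) * t ^ (-(2 * b))) :=
        mul_le_mul_of_nonneg_left (rpow_mul_one_add_sq_rpow_neg_le hlam ht hb) hu₀
    _ = lam ^ (-b) * (u * t ^ (-(2 * b))) := by ring
    _ ≤ _ := mul_le_mul_of_nonneg_left hind (by positivity)
variable [MeasurableSpace E] [BorelSpace E]

lemma measurable_bubbleProduct (a b lam : ℝ) (ζ : E) : Measurable (bubbleProduct a b lam ζ) := by
  unfold bubbleProduct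
  fun_prop

variable [NormedSpace ℝ E] [FiniteDimensional ℝ E] {μ : Measure E} [μ.IsAddHaarMeasure]

lemma integrable_indicator_ball_norm_rpow_neg {s : ℝ} (hs₀ : 0 ≤ s)
    (hs : s < finrank ℝ E) :
    Integrable ((ball (0 : E) 1).indicator fun y ↦ ‖y‖ ^ (-s)) μ := by
  have hd : 1 ≤ finrank ℝ E := by exact_mod_cast (hs₀.trans_lt hs)
  refine (integrable_indicator_iff measurableSet_ball).2
    (integrableOn_ball_of_norm_le_rpow (C := 1) hd hs (ae_of_all _ fun y ↦ ?_)
      (by fun_prop : Measurable _).aestronglyMeasurable)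
  rw [Real.norm_of_nonneg (by positivity), one_mul]

theorem exists_forall_integrable_bubbleProduct_and_integral_le {a b : ℝ} (hb : 0 ≤ b)
    (hbd : 2 * b < finrank ℝ E) (had : finrank ℝ E < 2 * a) :
    ∃ C, ∀ lam, 0 < lam → ∀ ζ : E, Integrable (bubbleProduct a b lam ζ) μ ∧
      ∫ x, bubbleProduct a b lam ζ x ∂μ ≤ C * lam ^ (-b) := by
  have hd : (0 : ℝ) < finrank ℝ E := by linarith
  have : Nontrivial E := nontrivial_of_finrank_pos (R := ℝ) (by exact_mod_cast hd)
  set g : E → ℝ := (ball (0 : E) 1).indicator fun y ↦ ‖y‖ ^ (-(2 * b))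
  set w : E → ℝ := fun x ↦ (1 + ‖x‖ ^ 2) ^ (-a)
  have hg : Integrable g μ := integrable_indicator_ball_norm_rpow_neg (by positivity) hbd
  have hw : Integrable w μ := by
    convert integrable_rpow_neg_one_add_norm_sq (μ := μ) had using 3
    ring
  refine ⟨∫ y, g y ∂μ + ∫ x, w x ∂μ, fun lam hlam ζ ↦ ?_⟩
  have hD : Integrable (fun x ↦ g (x - ζ) + w x) μ := (hg.comp_sub_right ζ).add hw
  have hdom : ∀ᵐ x ∂μ, bubbleProduct a b lam ζ x ≤ lam ^ (-b) * (g (x - ζ) + w x) := by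
    filter_upwards [compl_mem_ae_iff.2 (measure_singleton ζ)] with x hx
    exact bubbleProduct_le_of_ne (by linarith) hb hlam hx
  have hF : Integrable (bubbleProduct a b lam ζ) μ :=
    (hD.const_mul _).mono' (measurable_bubbleProduct a b lam ζ).aestronglyMeasurable
      (hdom.mono fun x hx ↦ by rwa [Real.norm_of_nonneg (bubbleProduct_nonneg hlam.le ζ x)])
  refine ⟨hF, ?_⟩
  calc ∫ x, bubbleProduct a b lam ζ x ∂μ ≤ ∫ x, lam ^ (-b) * (g (x - ζ) + w x) ∂μ :=
        integral_mono_ae hF (hD.const_mul _) hdom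
    _ = (∫ y, g y ∂μ + ∫ x, w x ∂μ) * lam ^ (-b) := by
        rw [integral_const_mul, integral_add (hg.comp_sub_right ζ) hw,
          integral_sub_right_eq_self g ζ, mul_comm]

theorem exists_pos_forall_le_integral_bubbleProduct {a b : ℝ} (ha : 0 ≤ a) (hb : 0 ≤ b) :
    ∃ c > 0, ∀ lam, 1 ≤ lam → ∀ ζ : E, ‖ζ‖ ≤ 1 → Integrable (bubbleProduct a b lam ζ) μ →
      c * lam ^ (-b) ≤ ∫ x, bubbleProduct a b lam ζ x ∂μ := by
  have hball : 0 < μ.real (ball 0 1) :=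
    ENNReal.toReal_pos (measure_ball_pos μ 0 one_pos).ne' measure_ball_lt_top.ne
  refine ⟨2 ^ (-a) * 5 ^ (-b) * μ.real (ball 0 1), by positivity,
    fun lam hlam ζ hζ hF ↦ ?_⟩
  have hlow : ∀ x ∈ ball (0 : E) 1,
      2 ^ (-a) * 5 ^ (-b) * lam ^ (-b) ≤ bubbleProduct a b lam ζ x := by
    intro x hx
    have hx1 : ‖x‖ < 1 := mem_ball_zero_iff.1 hx
    have hxζ : ‖x - ζ‖ ≤ 2 := (norm_sub_le x ζ).trans (by linarith)
    have h₁ : (2 : ℝ) ^ (-a) ≤ (1 + ‖x‖ ^ 2) ^ (-a) :=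
      Real.rpow_le_rpow_of_nonpos (by positivity) (by nlinarith [norm_nonneg x]) (by linarith)
    have h₂ : (5 : ℝ) ^ (-b) * lam ^ (-b) ≤ lam ^ b * (1 + lam ^ 2 * ‖x - ζ‖ ^ 2) ^ (-b) := by
      convert rpow_mul_rpow_neg_le_rpow_mul_one_add_sq hlam (norm_nonneg _) hxζ hb using 3
      norm_num
    rw [mul_assoc]
    exact mul_le_mul h₁ h₂ (by positivity) (by positivity)
  calc 2 ^ (-a) * 5 ^ (-b) * μ.real (ball 0 1) * lam ^ (-b)
      = 2 ^ (-a) * 5 ^ (-b) * lam ^ (-b) * μ.real (ball 0 1) := by ring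
    _ ≤ ∫ x in ball (0 : E) 1, bubbleProduct a b lam ζ x ∂μ :=
        setIntegral_ge_of_const_le_real measurableSet_ball measure_ball_lt_top.ne hlow
          hF.integrableOn
    _ ≤ ∫ x, bubbleProduct a b lam ζ x ∂μ :=
        setIntegral_le_integral hF (ae_of_all _ (bubbleProduct_nonneg (by linarith) ζ))

theorem stmt_6_general (N : ℕ) (hN : 3 ≤ N) (p q : ℝ) (hq : 0 < q)
    (hq' : q < (N : ℝ) / ((N : ℝ) - 2)) (hp' : (N : ℝ) / ((N : ℝ) - 2) < p) :
    ∃ c C : ℝ, 0 < c ∧ c ≤ C ∧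
      ∀ lam : ℝ, 1 ≤ lam → ∀ ζ : EuclideanSpace ℝ (Fin N), ‖ζ‖ ≤ lam⁻¹ →
        c * lam ^ (-(q * ((N : ℝ) - 2) / 2)) ≤
          (∫ x : EuclideanSpace ℝ (Fin N),
            (1 + ‖x‖ ^ 2) ^ (-(p * ((N : ℝ) - 2) / 2)) *
              (lam ^ (q * ((N : ℝ) - 2) / 2) *
                (1 + lam ^ 2 * ‖x - ζ‖ ^ 2) ^ (-(q * ((N : ℝ) - 2) / 2)))) ∧
        (∫ x : EuclideanSpace ℝ (Fin N),
            (1 + ‖x‖ ^ 2) ^ (-(p * ((N : ℝ) - 2) / 2)) *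
              (lam ^ (q * ((N : ℝ) - 2) / 2) *
                (1 + lam ^ 2 * ‖x - ζ‖ ^ 2) ^ (-(q * ((N : ℝ) - 2) / 2)))) ≤
          C * lam ^ (-(q * ((N : ℝ) - 2) / 2)) := by
  have hN3 : (3 : ℝ) ≤ N := by exact_mod_cast hN
  have hN2 : (0 : ℝ) < N - 2 := by linarith
  have hdim : (finrank ℝ (EuclideanSpace ℝ (Fin N)) : ℝ) = N := by simp
  have hbd : 2 * (q * (N - 2) / 2) < finrank ℝ (EuclideanSpace ℝ (Fin N)) := by
    linarith [(lt_div_iff₀ hN2).1 hq']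
  have had : (finrank ℝ (EuclideanSpace ℝ (Fin N)) : ℝ) < 2 * (p * (N - 2) / 2) := by
    linarith [(div_lt_iff₀ hN2).1 hp']
  obtain ⟨C, hC⟩ :=
    exists_forall_integrable_bubbleProduct_and_integral_le (μ := volume) (by positivity) hbd had
  obtain ⟨c, hc, hc'⟩ := exists_pos_forall_le_integral_bubbleProduct
    (μ := (volume : Measure (EuclideanSpace ℝ (Fin N)))) (a := p * (N - 2) / 2)
    (b := q * (N - 2) / 2) (by linarith) (by positivity)
  refine ⟨c, max c C, hc, le_max_left c C, fun lam hlam ζ hζ ↦ ?_⟩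
  obtain ⟨hF, hle⟩ := hC lam (by linarith) ζ
  exact ⟨hc' lam hlam ζ (hζ.trans (inv_le_one_of_one_le₀ hlam)) hF,
    hle.trans (by gcongr; exact le_max_right c C)⟩

/-- Bubble-interaction integral, unbalanced case: for `p + q = 2N/(N−2)` with
`q < N/(N−2) < p`, the integral `I(λ)` is comparable to `λ^{−q(N−2)/2}` uniformly for
`λ ≥ 1` and `|ζ| ≤ λ⁻¹`. -/
theorem stmt_6 (N : ℕ) (hN : 3 ≤ N) (p q : ℝ) (hp : 0 < p) (hq : 0 < q)
    (hpq : p + q = 2 * (N : ℝ) / ((N : ℝ) - 2))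
    (hq' : q < (N : ℝ) / ((N : ℝ) - 2)) (hp' : (N : ℝ) / ((N : ℝ) - 2) < p) :
    ∃ c C : ℝ, 0 < c ∧ c ≤ C ∧
      ∀ lam : ℝ, 1 ≤ lam → ∀ ζ : EuclideanSpace ℝ (Fin N), ‖ζ‖ ≤ lam⁻¹ →
        c * lam ^ (-(q * ((N : ℝ) - 2) / 2)) ≤
          (∫ x : EuclideanSpace ℝ (Fin N),
            (1 + ‖x‖ ^ 2) ^ (-(p * ((N : ℝ) - 2) / 2)) *
              (lam ^ (q * ((N : ℝ) - 2) / 2) *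
                (1 + lam ^ 2 * ‖x - ζ‖ ^ 2) ^ (-(q * ((N : ℝ) - 2) / 2)))) ∧
        (∫ x : EuclideanSpace ℝ (Fin N),
            (1 + ‖x‖ ^ 2) ^ (-(p * ((N : ℝ) - 2) / 2)) *
              (lam ^ (q * ((N : ℝ) - 2) / 2) *
                (1 + lam ^ 2 * ‖x - ζ‖ ^ 2) ^ (-(q * ((N : ℝ) - 2) / 2)))) ≤
          C * lam ^ (-(q * ((N : ℝ) - 2) / 2)) :=
  stmt_6_general N hN p q hq hq' hp'
end

section
/- Let N ≥ 3 and set p = q = N/(N−2), so p + q = 2N/(N−2). For U_{1,0}(x) = (1+|x|²)^{−(N−2)/2} and U_{λ,0}(x) = (λ/(1+λ²|x|²))^{(N−2)/2} with λ ≥ 2, there exist constants 0 < c ≤ C depending only on N such that c · λ^{−N/2} log λ ≤ ∫_{ℝ^N} U_{1,0}^{N/(N−2)} U_{λ,0}^{N/(N−2)} dx ≤ C · λ^{−N/2} log λ. -/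
/-!
In polar coordinates the integral is `N |B₁|` times
`∫₀^∞ r^(N-1) (1+r²)^(-N/2) λ^(N/2) (1+λ²r²)^(-N/2) dr`. For `1/λ ≤ r ≤ 1` the integrand is
comparable to `λ^(-N/2) r⁻¹`, which integrates to `λ^(-N/2) log λ`. On `r ≤ 1/λ` the integrand
is at most `λ^(N/2) r^(N-1)` and on `r ≥ 1` at most `λ^(-N/2) r^(-N-1)`, so these two ranges
contribute only `O(λ^(-N/2))`.
-/

open MeasureTheory Set

/-- `bubbleProfile N |x| = U_{1,0}(x) ^ (N/(N-2))` and
`U_{λ,0}(x) ^ (N/(N-2)) = λ^(N/2) bubbleProfile N (λ|x|)`. -/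
noncomputable def bubbleProfile (N : ℕ) (t : ℝ) : ℝ := (1 + t ^ 2) ^ (-((N : ℝ) / 2))

namespace bubbleProfile

variable (N : ℕ)

lemma continuous : Continuous (bubbleProfile N) :=
  (by fun_prop : Continuous fun t : ℝ => 1 + t ^ 2).rpow_const fun _ => Or.inl (by positivity)

lemma nonneg (t : ℝ) : 0 ≤ bubbleProfile N t := by
  unfold bubbleProfile; positivity

lemma le_one (t : ℝ) : bubbleProfile N t ≤ 1 :=
  Real.rpow_le_one_of_one_le_of_nonpos (by nlinarith) (by linarith [(N.cast_nonneg : (0:ℝ) ≤ N)])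

lemma sq_rpow_neg_half {t : ℝ} (ht : 0 ≤ t) : (t ^ 2) ^ (-((N : ℝ) / 2)) = (t ^ N)⁻¹ := by
  rw [Real.rpow_neg (by positivity), ← Real.rpow_natCast t 2, ← Real.rpow_mul ht,
    ← Real.rpow_natCast]
  congr 2; push_cast; ring

lemma le_inv_pow {t : ℝ} (ht : 0 < t) : bubbleProfile N t ≤ (t ^ N)⁻¹ := by
  rw [← sq_rpow_neg_half N ht.le]
  exact Real.rpow_le_rpow_of_nonpos (by positivity) (by linarith)
    (by linarith [(N.cast_nonneg : (0:ℝ) ≤ N)])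

lemma inv_one_add_pow_le {t : ℝ} (ht : 0 ≤ t) : ((1 + t) ^ N)⁻¹ ≤ bubbleProfile N t := by
  rw [← sq_rpow_neg_half N (by linarith)]
  exact Real.rpow_le_rpow_of_nonpos (by positivity) (by nlinarith)
    (by linarith [(N.cast_nonneg : (0:ℝ) ≤ N)])

end bubbleProfile

lemma pow_pred_mul_inv_pow {N : ℕ} (hN : N ≠ 0) (r : ℝ) : r ^ (N - 1) * (r ^ N)⁻¹ = r⁻¹ := by
  obtain ⟨n, rfl⟩ := Nat.exists_eq_succ_of_ne_zero hN
  rcases eq_or_ne r 0 with rfl | hr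
  · simp
  · field_simp; simp [pow_succ]

lemma rpow_half_mul_inv_pow (N : ℕ) {lam : ℝ} (hlam : 0 < lam) :
    lam ^ ((N : ℝ) / 2) * (lam ^ N)⁻¹ = lam ^ (-((N : ℝ) / 2)) := by
  rw [← Real.rpow_natCast, ← Real.rpow_neg hlam.le, ← Real.rpow_add hlam]
  congr 1; ring

lemma integral_pow_pred {N : ℕ} (hN : N ≠ 0) (b : ℝ) :
    ∫ x in (0 : ℝ)..b, x ^ (N - 1) = b ^ N / N := by
  rw [integral_pow, Nat.sub_add_cancel (Nat.one_le_iff_ne_zero.mpr hN), zero_pow hN, sub_zero,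
    Nat.cast_pred (Nat.pos_of_ne_zero hN), sub_add_cancel]

lemma neg_succ_lt_neg_one {N : ℕ} (hN : N ≠ 0) : -((N : ℝ) + 1) < -1 := by
  have : (0 : ℝ) < N := by positivity
  linarith

lemma integral_Ioi_one_rpow_neg_succ {N : ℕ} (hN : N ≠ 0) :
    ∫ x in Ioi (1 : ℝ), x ^ (-((N : ℝ) + 1)) = 1 / N := by
  rw [integral_Ioi_rpow_of_lt (neg_succ_lt_neg_one hN) one_pos, Real.one_rpow, neg_add_rev,
    neg_add_cancel_comm, neg_div_neg_eq]

noncomputable def radialInteraction (N : ℕ) (lam r : ℝ) : ℝ :=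
  r ^ (N - 1) * (bubbleProfile N r * (lam ^ ((N : ℝ) / 2) * bubbleProfile N (lam * r)))

namespace radialInteraction

variable {N : ℕ} {lam r : ℝ}

lemma continuous (N : ℕ) (lam : ℝ) : Continuous (radialInteraction N lam) := by
  have := bubbleProfile.continuous N
  unfold radialInteraction; fun_prop

lemma nonneg (hlam : 0 ≤ lam) (hr : 0 ≤ r) : 0 ≤ radialInteraction N lam r :=
  mul_nonneg (by positivity) (mul_nonneg (bubbleProfile.nonneg N r)
    (mul_nonneg (by positivity) (bubbleProfile.nonneg N _)))

lemma le_of_bubbleProfile_le {a b : ℝ} (hlam : 0 ≤ lam) (hr : 0 ≤ r)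
    (ha : bubbleProfile N r ≤ a) (hb : bubbleProfile N (lam * r) ≤ b) :
    radialInteraction N lam r ≤ r ^ (N - 1) * (a * (lam ^ ((N : ℝ) / 2) * b)) := by
  unfold radialInteraction
  gcongr
  · exact mul_nonneg (by positivity) (bubbleProfile.nonneg N _)
  · exact (bubbleProfile.nonneg N r).trans ha

lemma le_of_le_bubbleProfile {a b : ℝ} (hb₀ : 0 ≤ b) (hlam : 0 ≤ lam) (hr : 0 ≤ r)
    (ha : a ≤ bubbleProfile N r) (hb : b ≤ bubbleProfile N (lam * r)) :
    r ^ (N - 1) * (a * (lam ^ ((N : ℝ) / 2) * b)) ≤ radialInteraction N lam r := by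
  unfold radialInteraction
  gcongr
  exact bubbleProfile.nonneg N r

lemma le_mul_pow_pred (hlam : 0 ≤ lam) (hr : 0 ≤ r) :
    radialInteraction N lam r ≤ lam ^ ((N : ℝ) / 2) * r ^ (N - 1) :=
  (le_of_bubbleProfile_le hlam hr (bubbleProfile.le_one N _) (bubbleProfile.le_one N _)).trans_eq
    (by ring)

lemma pow_pred_mul_rpow_half_mul_inv_pow (hN : N ≠ 0) (hlam : 0 < lam) (r : ℝ) :
    r ^ (N - 1) * (lam ^ ((N : ℝ) / 2) * ((lam * r) ^ N)⁻¹) = lam ^ (-((N : ℝ) / 2)) * r⁻¹ := by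
  rw [mul_pow, mul_inv, ← rpow_half_mul_inv_pow N hlam, ← pow_pred_mul_inv_pow hN r]
  ring

lemma le_mul_inv (hN : N ≠ 0) (hlam : 0 < lam) (hr : 0 < r) :
    radialInteraction N lam r ≤ lam ^ (-((N : ℝ) / 2)) * r⁻¹ := by
  refine (le_of_bubbleProfile_le hlam.le hr.le (bubbleProfile.le_one N _)
    (bubbleProfile.le_inv_pow N (by positivity))).trans_eq ?_
  rw [one_mul, pow_pred_mul_rpow_half_mul_inv_pow hN hlam]

lemma le_mul_rpow_neg_succ (hN : N ≠ 0) (hlam : 0 < lam) (hr : 0 < r) :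
    radialInteraction N lam r ≤ lam ^ (-((N : ℝ) / 2)) * r ^ (-((N : ℝ) + 1)) := by
  refine (le_of_bubbleProfile_le hlam.le hr.le (bubbleProfile.le_inv_pow N hr)
    (bubbleProfile.le_inv_pow N (by positivity))).trans_eq ?_
  calc r ^ (N - 1) * ((r ^ N)⁻¹ * (lam ^ ((N : ℝ) / 2) * ((lam * r) ^ N)⁻¹))
      = (r ^ N)⁻¹ * (r ^ (N - 1) * (lam ^ ((N : ℝ) / 2) * ((lam * r) ^ N)⁻¹)) := by ring
    _ = _ := by
        rw [pow_pred_mul_rpow_half_mul_inv_pow hN hlam, Real.rpow_neg hr.le,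
          ← Nat.cast_add_one, Real.rpow_natCast, pow_succ]
        ring

lemma inv_four_pow_mul_le (hN : N ≠ 0) (hlam : 0 < lam) (hr : 1 / lam ≤ r) (hr1 : r ≤ 1) :
    (4 ^ N)⁻¹ * (lam ^ (-((N : ℝ) / 2)) * r⁻¹) ≤ radialInteraction N lam r := by
  have hr0 : 0 < r := lt_of_lt_of_le (by positivity) hr
  have hlr : 1 ≤ lam * r := by rwa [div_le_iff₀' hlam] at hr
  calc (4 ^ N)⁻¹ * (lam ^ (-((N : ℝ) / 2)) * r⁻¹)
      = r ^ (N - 1) * ((2 ^ N)⁻¹ * (lam ^ ((N : ℝ) / 2) * ((2 * (lam * r)) ^ N)⁻¹)) := by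
        rw [← pow_pred_mul_rpow_half_mul_inv_pow hN hlam, mul_pow 2 (lam * r),
          show (4 : ℝ) = 2 * 2 by norm_num, mul_pow]
        field_simp
    _ ≤ r ^ (N - 1) * (((1 + r) ^ N)⁻¹ * (lam ^ ((N : ℝ) / 2) * ((1 + lam * r) ^ N)⁻¹)) := by
        gcongr <;> linarith
    _ ≤ radialInteraction N lam r :=
        le_of_le_bubbleProfile (by positivity) hlam.le hr0.le
          (bubbleProfile.inv_one_add_pow_le N hr0.le)
          (bubbleProfile.inv_one_add_pow_le N (by positivity))

lemma integrableOn_Ioi (hN : N ≠ 0) (hlam : 0 < lam) :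
    IntegrableOn (radialInteraction N lam) (Ioi 0) := by
  rw [← Ioc_union_Ioi_eq_Ioi zero_le_one]
  refine (continuous N lam).integrableOn_Ioc.union ?_
  refine Integrable.mono' ((integrableOn_Ioi_rpow_of_lt (neg_succ_lt_neg_one hN)
    one_pos).const_mul (lam ^ (-((N : ℝ) / 2)))) (continuous N lam).aestronglyMeasurable.restrict ?_
  filter_upwards [ae_restrict_mem measurableSet_Ioi] with r (hr : 1 < r)
  rw [Real.norm_of_nonneg (nonneg hlam.le (by linarith))]
  exact le_mul_rpow_neg_succ hN hlam (by linarith)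

lemma integral_Ioi_eq_add (hN : N ≠ 0) (hlam : 0 < lam) (a : ℝ) :
    ∫ r in Ioi 0, radialInteraction N lam r =
      (∫ r in 0..a, radialInteraction N lam r) + (∫ r in a..1, radialInteraction N lam r) +
        ∫ r in Ioi 1, radialInteraction N lam r := by
  have hint := integrableOn_Ioi hN hlam
  have hc := continuous N lam
  rw [intervalIntegral.integral_add_adjacent_intervals (hc.intervalIntegrable _ _)
    (hc.intervalIntegrable _ _), intervalIntegral.integral_interval_add_Ioi hint
    (hint.mono_set (Ioi_subset_Ioi zero_le_one))]

lemma integral_Ioi_le (hN : N ≠ 0) (hlam : 1 ≤ lam) :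
    ∫ r in Ioi 0, radialInteraction N lam r ≤
      lam ^ (-((N : ℝ) / 2)) * (Real.log lam + 2 / N) := by
  have hlam0 : 0 < lam := by linarith
  have hc := continuous N lam
  have ha : 0 < 1 / lam := by positivity
  have ha1 : 1 / lam ≤ 1 := by rw [div_le_one hlam0]; exact hlam
  have hsmall : ∫ r in 0..1 / lam, radialInteraction N lam r ≤ lam ^ (-((N : ℝ) / 2)) / N :=
    calc ∫ r in 0..1 / lam, radialInteraction N lam r
        ≤ ∫ r in 0..1 / lam, lam ^ ((N : ℝ) / 2) * r ^ (N - 1) :=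
          intervalIntegral.integral_mono_on ha.le (hc.intervalIntegrable _ _)
            ((continuous_const.mul (continuous_pow _)).intervalIntegrable _ _)
            fun r hr => le_mul_pow_pred hlam0.le hr.1
      _ = lam ^ (-((N : ℝ) / 2)) / N := by
          rw [intervalIntegral.integral_const_mul, integral_pow_pred hN, one_div, inv_pow,
            mul_div_assoc', rpow_half_mul_inv_pow N hlam0]
  have hmiddle : ∫ r in 1 / lam..1, radialInteraction N lam r ≤
      lam ^ (-((N : ℝ) / 2)) * Real.log lam :=
    calc ∫ r in 1 / lam..1, radialInteraction N lam r
        ≤ ∫ r in 1 / lam..1, lam ^ (-((N : ℝ) / 2)) * r⁻¹ :=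
          intervalIntegral.integral_mono_on ha1 (hc.intervalIntegrable _ _)
            ((intervalIntegrable_inv_iff.2 (Or.inr (notMem_uIcc_of_lt ha one_pos))).const_mul _)
            fun r hr => le_mul_inv hN hlam0 (ha.trans_le hr.1)
      _ = lam ^ (-((N : ℝ) / 2)) * Real.log lam := by
          rw [intervalIntegral.integral_const_mul, integral_inv_of_pos ha one_pos, one_div_one_div]
  have hlarge : ∫ r in Ioi 1, radialInteraction N lam r ≤ lam ^ (-((N : ℝ) / 2)) / N :=
    calc ∫ r in Ioi 1, radialInteraction N lam r
        ≤ ∫ r in Ioi 1, lam ^ (-((N : ℝ) / 2)) * r ^ (-((N : ℝ) + 1)) :=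
          setIntegral_mono_on ((integrableOn_Ioi hN hlam0).mono_set (Ioi_subset_Ioi zero_le_one))
            ((integrableOn_Ioi_rpow_of_lt (neg_succ_lt_neg_one hN) one_pos).const_mul _)
            measurableSet_Ioi fun r (hr : 1 < r) => le_mul_rpow_neg_succ hN hlam0 (by linarith)
      _ = lam ^ (-((N : ℝ) / 2)) / N := by
          rw [integral_const_mul, integral_Ioi_one_rpow_neg_succ hN, mul_one_div]
  rw [integral_Ioi_eq_add hN hlam0 (1 / lam)]
  linear_combination hsmall + hmiddle + hlarge

lemma inv_four_pow_mul_le_integral_Ioi (hN : N ≠ 0) (hlam : 1 ≤ lam) :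
    (4 ^ N)⁻¹ * (lam ^ (-((N : ℝ) / 2)) * Real.log lam) ≤
      ∫ r in Ioi 0, radialInteraction N lam r := by
  have hlam0 : 0 < lam := by linarith
  have ha : 0 < 1 / lam := by positivity
  have ha1 : 1 / lam ≤ 1 := by rw [div_le_one hlam0]; exact hlam
  have hmiddle : (4 ^ N)⁻¹ * (lam ^ (-((N : ℝ) / 2)) * Real.log lam) ≤
      ∫ r in 1 / lam..1, radialInteraction N lam r :=
    calc (4 ^ N)⁻¹ * (lam ^ (-((N : ℝ) / 2)) * Real.log lam)
        = ∫ r in 1 / lam..1, (4 ^ N)⁻¹ * (lam ^ (-((N : ℝ) / 2)) * r⁻¹) := by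
          rw [intervalIntegral.integral_const_mul, intervalIntegral.integral_const_mul,
            integral_inv_of_pos ha one_pos, one_div_one_div]
      _ ≤ ∫ r in 1 / lam..1, radialInteraction N lam r :=
          intervalIntegral.integral_mono_on ha1
            (((intervalIntegrable_inv_iff.2 (Or.inr (notMem_uIcc_of_lt ha one_pos))).const_mul
              _).const_mul _)
            ((continuous N lam).intervalIntegrable _ _)
            fun r hr => inv_four_pow_mul_le hN hlam0 hr.1 hr.2
  have hsmall : 0 ≤ ∫ r in 0..1 / lam, radialInteraction N lam r :=
    intervalIntegral.integral_nonneg ha.le fun r hr => nonneg hlam0.le hr.1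
  have hlarge : 0 ≤ ∫ r in Ioi 1, radialInteraction N lam r :=
    setIntegral_nonneg measurableSet_Ioi fun r (hr : 1 < r) => nonneg hlam0.le (by linarith)
  rw [integral_Ioi_eq_add hN hlam0 (1 / lam)]
  linarith

end radialInteraction

lemma bubble_product_eq_bubbleProfile {N : ℕ} (hN : (N : ℝ) ≠ 2) {lam : ℝ} (hlam : 0 ≤ lam)
    (r : ℝ) :
    ((1 + r ^ 2) ^ (-(((N : ℝ) - 2) / 2))) ^ ((N : ℝ) / ((N : ℝ) - 2)) *
        ((lam / (1 + lam ^ 2 * r ^ 2)) ^ (((N : ℝ) - 2) / 2)) ^ ((N : ℝ) / ((N : ℝ) - 2)) =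
      bubbleProfile N r * (lam ^ ((N : ℝ) / 2) * bubbleProfile N (lam * r)) := by
  have hN2 : (N : ℝ) - 2 ≠ 0 := sub_ne_zero.mpr hN
  have h1 : (0 : ℝ) < 1 + r ^ 2 := by positivity
  have h2 : (0 : ℝ) < 1 + (lam * r) ^ 2 := by positivity
  rw [← Real.rpow_mul h1.le, ← mul_pow, ← Real.rpow_mul (by positivity),
    Real.div_rpow hlam h2.le, bubbleProfile, bubbleProfile, Real.rpow_neg h2.le]
  field_simp

lemma integral_bubble_product_eq {N : ℕ} [Nontrivial (EuclideanSpace ℝ (Fin N))]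
    (hN : (N : ℝ) ≠ 2) {lam : ℝ} (hlam : 0 ≤ lam) :
    (∫ x : EuclideanSpace ℝ (Fin N),
        ((1 + ‖x‖ ^ 2) ^ (-(((N : ℝ) - 2) / 2))) ^ ((N : ℝ) / ((N : ℝ) - 2)) *
          ((lam / (1 + lam ^ 2 * ‖x‖ ^ 2)) ^ (((N : ℝ) - 2) / 2)) ^ ((N : ℝ) / ((N : ℝ) - 2))) =
      N * volume.real (Metric.ball (0 : EuclideanSpace ℝ (Fin N)) 1) *
        ∫ r in Ioi 0, radialInteraction N lam r := by
  simp_rw [bubble_product_eq_bubbleProfile hN hlam]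
  rw [integral_fun_norm_addHaar volume
    (fun r => bubbleProfile N r * (lam ^ ((N : ℝ) / 2) * bubbleProfile N (lam * r))),
    finrank_euclideanSpace_fin, nsmul_eq_mul, smul_eq_mul, mul_assoc]
  rfl

/-- Bubble-interaction integral, balanced case `p = q = N/(N−2)`: the interaction of
`U_{1,0}` and `U_{λ,0}` is comparable to `λ^{−N/2} log λ` for `λ ≥ 2`. -/
theorem stmt_7 (N : ℕ) (hN : 3 ≤ N) :
    ∃ c C : ℝ, 0 < c ∧ c ≤ C ∧
      ∀ lam : ℝ, 2 ≤ lam →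
        c * lam ^ (-((N : ℝ) / 2)) * Real.log lam ≤
          (∫ x : EuclideanSpace ℝ (Fin N),
            ((1 + ‖x‖ ^ 2) ^ (-(((N : ℝ) - 2) / 2))) ^ ((N : ℝ) / ((N : ℝ) - 2)) *
              ((lam / (1 + lam ^ 2 * ‖x‖ ^ 2)) ^ (((N : ℝ) - 2) / 2)) ^
                ((N : ℝ) / ((N : ℝ) - 2))) ∧
        (∫ x : EuclideanSpace ℝ (Fin N),
            ((1 + ‖x‖ ^ 2) ^ (-(((N : ℝ) - 2) / 2))) ^ ((N : ℝ) / ((N : ℝ) - 2)) *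
              ((lam / (1 + lam ^ 2 * ‖x‖ ^ 2)) ^ (((N : ℝ) - 2) / 2)) ^
                ((N : ℝ) / ((N : ℝ) - 2))) ≤
          C * lam ^ (-((N : ℝ) / 2)) * Real.log lam := by
  have hN0 : N ≠ 0 := by omega
  have : Nontrivial (EuclideanSpace ℝ (Fin N)) :=
    Module.nontrivial_of_finrank_pos (R := ℝ) (by rw [finrank_euclideanSpace_fin]; omega)
  set K := N * volume.real (Metric.ball (0 : EuclideanSpace ℝ (Fin N)) 1)
  have hK : 0 < K := mul_pos (by positivity)
    (ENNReal.toReal_pos (Metric.measure_ball_pos volume 0 one_pos).ne' measure_ball_lt_top.ne)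
  refine ⟨K * (4 ^ N)⁻¹, 3 * K, by positivity, ?_, fun lam hlam => ?_⟩
  · have : (4 ^ N : ℝ)⁻¹ ≤ 1 := inv_le_one_of_one_le₀ (one_le_pow₀ (by norm_num))
    nlinarith
  have hlam0 : 0 ≤ lam := by linarith
  have hlog : 1 ≤ 2 * Real.log lam := by
    linarith [Real.log_two_gt_d9, Real.log_le_log two_pos hlam]
  have h2N : 2 / (N : ℝ) ≤ 1 := by
    rw [div_le_one (by positivity)]; exact_mod_cast (by omega : 2 ≤ N)
  rw [integral_bubble_product_eq (by norm_cast; omega) hlam0]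
  have hlower := radialInteraction.inv_four_pow_mul_le_integral_Ioi hN0 (by linarith : 1 ≤ lam)
  have hupper := radialInteraction.integral_Ioi_le hN0 (by linarith : 1 ≤ lam)
  constructor
  · calc K * (4 ^ N)⁻¹ * lam ^ (-((N : ℝ) / 2)) * Real.log lam
        = K * ((4 ^ N)⁻¹ * (lam ^ (-((N : ℝ) / 2)) * Real.log lam)) := by ring
      _ ≤ _ := by gcongr
  · calc K * ∫ r in Ioi 0, radialInteraction N lam r
        ≤ K * (lam ^ (-((N : ℝ) / 2)) * (Real.log lam + 2 / N)) := by gcongr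
      _ ≤ K * (lam ^ (-((N : ℝ) / 2)) * (3 * Real.log lam)) := by gcongr; linarith
      _ = 3 * K * lam ^ (-((N : ℝ) / 2)) * Real.log lam := by ring
end
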